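/- For every natural number n ≥ 5, the number of partitions of n with rank 0 whose Durfee symbol (α,β)_d satisfies β_1 ≤ d − 1 and α_1 ≤ d − 2 (note rank 0 is equivalent to ℓ(α) = ℓ(β)) is at most the number of partitions of n whose Durfee symbol (γ,δ)_{d'} satisfies ℓ(γ) = ℓ(δ) − 1, γ_1 ≤ d' − 1 and δ_1 = d'. -/

import Mathlib

open Nat Finset

namespace StrUni

/-- `u m n`: the number of strongly unimodal sequences of weight `n` and rank `m`.
A strongly unimodal sequence is a finite list of positive integers which strictly
increases up to a peak (at 0-based index `k`) and strictly decreases afterwards;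
its rank is `ℓ - 2(k+1) + 1` where the peak is the `(k+1)`-st entry. -/
noncomputable def u (m : ℤ) (n : ℕ) : ℕ :=
  Nat.card {l : List ℕ //
    l.sum = n ∧ (∀ x ∈ l, 0 < x) ∧
    ∃ k : ℕ, k < l.length ∧
      (∀ i : ℕ, i + 1 ≤ k → l.getD i 0 < l.getD (i + 1) 0) ∧
      (∀ i : ℕ, k ≤ i → i + 1 < l.length → l.getD (i + 1) 0 < l.getD i 0) ∧
      (l.length : ℤ) - 2 * ((k : ℤ) + 1) + 1 = m}

/-- A list `l` is a partition of `n`: weakly decreasing, positive parts, sum `n`. -/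
def IsPartition (l : List ℕ) (n : ℕ) : Prop :=
  l.Pairwise (· ≥ ·) ∧ (∀ x ∈ l, 0 < x) ∧ l.sum = n

/-- Dyson's rank of a partition (list form): largest part minus number of parts. -/
def rankL (l : List ℕ) : ℤ := (l.headD 0 : ℤ) - l.length

/-- `r` belongs to the rank-set `{j - λ_{j+1} : j = 0, 1, 2, ...}` of the partition `l`. -/
def InRankSet (l : List ℕ) (r : ℤ) : Prop := ∃ j : ℕ, (j : ℤ) - (l.getD j 0 : ℤ) = r

/-- Dyson's rank of a partition (multiset form). -/
def rank {n : ℕ} (p : n.Partition) : ℤ := (p.parts.sup : ℤ) - p.parts.card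

/-- The Andrews–Garvan crank of a partition. -/
def crank {n : ℕ} (p : n.Partition) : ℤ :=
  if p.parts.count 1 = 0 then (p.parts.sup : ℤ)
  else ((p.parts.filter (fun x => p.parts.count 1 < x)).card : ℤ) - p.parts.count 1

/-- `p n`: the number of partitions of `n`. -/
def partitionCount (n : ℕ) : ℕ := Fintype.card n.Partition

/-- `N m n`: the number of partitions of `n` with rank `m`. -/
def N (m : ℤ) (n : ℕ) : ℕ := (Finset.univ.filter (fun p : n.Partition => rank p = m)).card

/-- `M m n`: the number of partitions of `n` with crank `m`. -/
def M (m : ℤ) (n : ℕ) : ℕ := (Finset.univ.filter (fun p : n.Partition => crank p = m)).card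

/-- `ospt n = Σ_{λ⊢n, crank≥0} crank(λ) − Σ_{λ⊢n, rank≥0} rank(λ)`. -/
def ospt (n : ℕ) : ℤ :=
  (∑ p ∈ Finset.univ.filter (fun p : n.Partition => 0 ≤ crank p), crank p) -
  (∑ p ∈ Finset.univ.filter (fun p : n.Partition => 0 ≤ rank p), rank p)

/-- The conjugate of a partition given as a list. -/
def conjugate (l : List ℕ) : List ℕ :=
  (List.range (l.headD 0)).map (fun i => (l.filter (fun x => i < x)).length)

/-- The `m`-Durfee rectangle size `j` of a partition `l`: the largest `k ≥ 1` with
`λ_{k+m} ≥ k`, and `0` if there is no such `k`. -/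
def mDurfee (m : ℕ) (l : List ℕ) : ℕ :=
  Nat.findGreatest (fun k => k ≤ l.getD (k + m - 1) 0) l.length

/-- `α` in the `m`-Durfee rectangle symbol `(α, β)_{(m+j)×j}`:
the conjugate of `(λ_1 - j, ..., λ_{m+j} - j)`. -/
def mAlpha (m : ℕ) (l : List ℕ) : List ℕ :=
  conjugate ((l.take (m + mDurfee m l)).map (fun x => x - mDurfee m l))

/-- `β` in the `m`-Durfee rectangle symbol: the rows below the rectangle. -/
def mBeta (m : ℕ) (l : List ℕ) : List ℕ := l.drop (m + mDurfee m l)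

/-- The Durfee square side of a partition. -/
def durfee (l : List ℕ) : ℕ := mDurfee 0 l

/-- `γ` in the Durfee symbol `(γ, δ)_d`. -/
def dGamma (l : List ℕ) : List ℕ := mAlpha 0 l

/-- `δ` in the Durfee symbol `(γ, δ)_d`. -/
def dDelta (l : List ℕ) : List ℕ := mBeta 0 l

end StrUni

namespace StrUni

private lemma getD_anti {l : List ℕ} (h : l.Pairwise (· ≥ ·)) {i j : ℕ} (hij : i ≤ j) :
    l.getD j 0 ≤ l.getD i 0 := by
  rcases lt_or_ge j l.length with hj | hj
  · have hi : i < l.length := lt_of_le_of_lt hij hj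
    rw [List.getD_eq_getElem l 0 hj, List.getD_eq_getElem l 0 hi]
    rcases eq_or_lt_of_le hij with rfl | hlt
    · exact le_refl _
    · exact (List.pairwise_iff_getElem.mp h) i j hi hj hlt
  · rw [List.getD_eq_default l 0 hj]
    exact Nat.zero_le _

private lemma sorted_of_getD {l : List ℕ}
    (h : ∀ i, i + 1 < l.length → l.getD (i + 1) 0 ≤ l.getD i 0) :
    l.Pairwise (· ≥ ·) := by
  have anti : ∀ k i, i + k < l.length → l.getD (i + k) 0 ≤ l.getD i 0 := by
    intro k
    induction k with
    | zero => intro i _; simp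
    | succ k ih =>
      intro i hik
      have h1 := ih i (by omega)
      have h2 := h (i + k) (by omega)
      calc l.getD (i + (k+1)) 0 = l.getD ((i + k) + 1) 0 := by ring_nf
        _ ≤ l.getD (i + k) 0 := h2
        _ ≤ l.getD i 0 := h1
  rw [List.pairwise_iff_getElem]
  intro i j hi hj hij
  have := anti (j - i) i (by omega)
  rw [show i + (j - i) = j by omega] at this
  rw [List.getD_eq_getElem l 0 hj, List.getD_eq_getElem l 0 hi] at this
  exact this

private lemma map_range_getD (l : List ℕ) :
    (List.range l.length).map (fun i => l.getD i 0) = l := by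
  apply List.ext_getElem
  · simp
  · intro n h1 h2
    simp [List.getD, h2, List.getElem?_eq_getElem]

private lemma sum_map_range (f : ℕ → ℕ) (k : ℕ) :
    ((List.range k).map f).sum = ∑ i ∈ Finset.range k, f i := by
  induction k with
  | zero => simp
  | succ k ih =>
    rw [List.range_succ, List.map_append, List.sum_append, Finset.sum_range_succ, ih]
    simp

private lemma sum_eq_sum_getD (l : List ℕ) :
    l.sum = ∑ i ∈ Finset.range l.length, l.getD i 0 := by
  conv_lhs => rw [← map_range_getD l]
  rw [sum_map_range]

private lemma headD_drop (l : List ℕ) (k : ℕ) : (l.drop k).headD 0 = l.getD k 0 := by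
  induction l generalizing k with
  | nil => simp
  | cons a t ih =>
    cases k with
    | zero => simp [List.getD]
    | succ k => simp only [List.drop_succ_cons, List.getD_cons_succ]; exact ih k

private lemma headD_eq_getD (l : List ℕ) : l.headD 0 = l.getD 0 0 := by
  cases l <;> simp [List.getD]

private lemma headD_map_take (l : List ℕ) (f : ℕ → ℕ) {k : ℕ} (hk : 0 < k) (hl : l ≠ []) :
    ((l.take k).map f).headD 0 = f (l.getD 0 0) := by
  cases l with
  | nil => exact absurd rfl hl
  | cons a t =>
    cases k with
    | zero => omega
    | succ k => simp [List.getD]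

private lemma conjugate_length (m : List ℕ) : (conjugate m).length = m.headD 0 := by
  simp [conjugate]

private lemma conjugate_headD (m : List ℕ) (h : m.headD 0 ≠ 0) :
    (conjugate m).headD 0 = m.countP (fun x => 0 < x) := by
  obtain ⟨k, hk⟩ : ∃ k, m.headD 0 = k + 1 :=
    ⟨m.headD 0 - 1, (Nat.succ_pred_eq_of_pos (Nat.pos_of_ne_zero h)).symm⟩
  rw [conjugate, hk, List.range_succ_eq_map]
  simp [List.countP_eq_length_filter]

private lemma durfee_def (l : List ℕ) :
    durfee l = Nat.findGreatest (fun k => k ≤ l.getD (k - 1) 0) l.length := by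
  simp [durfee, mDurfee]

private lemma dGamma_eq (l : List ℕ) :
    dGamma l = conjugate ((l.take (durfee l)).map (fun x => x - durfee l)) := by
  simp [dGamma, mAlpha, durfee]

private lemma dDelta_eq (l : List ℕ) : dDelta l = l.drop (durfee l) := by
  simp [dDelta, mBeta, durfee]

private lemma durfee_le_length (l : List ℕ) : durfee l ≤ l.length := by
  rw [durfee_def]; exact Nat.findGreatest_le _

private lemma durfee_eq {l : List ℕ} (h : l.Pairwise (· ≥ ·)) {k : ℕ} (hk1 : 1 ≤ k)
    (hk : k ≤ l.length) (h1 : k ≤ l.getD (k - 1) 0) (h2 : l.getD k 0 ≤ k) :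
    durfee l = k := by
  rw [durfee_def]
  apply le_antisymm
  · by_contra hlt
    push_neg at hlt
    have hfg : Nat.findGreatest (fun k => k ≤ l.getD (k - 1) 0) l.length ≤
        l.getD (Nat.findGreatest (fun k => k ≤ l.getD (k - 1) 0) l.length - 1) 0 :=
      Nat.findGreatest_spec (P := fun k => k ≤ l.getD (k - 1) 0) hk h1
    have hle : l.getD (Nat.findGreatest (fun k => k ≤ l.getD (k - 1) 0) l.length - 1) 0
        ≤ l.getD k 0 := getD_anti h (by omega)
    omega
  · exact Nat.le_findGreatest hk h1

private lemma key {n : ℕ} (hn : 5 ≤ n) {l : List ℕ}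
    (hP : IsPartition l n) (hrank : rankL l = 0)
    (hβ : ((dDelta l).headD 0 : ℤ) ≤ (durfee l : ℤ) - 1)
    (hγ : ((dGamma l).headD 0 : ℤ) ≤ (durfee l : ℤ) - 2) :
    3 ≤ durfee l ∧ durfee l ≤ l.length ∧ l.getD 0 0 = l.length ∧
    l.getD (durfee l - 2) 0 = durfee l ∧ l.getD (durfee l - 1) 0 = durfee l ∧
    l.getD (durfee l) 0 ≤ durfee l - 1 := by
  obtain ⟨hs, hpos, hsum⟩ := hP
  set d := durfee l with hd
  have hlnil : l ≠ [] := by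
    intro h; rw [h] at hsum; simp at hsum; omega
  have hlen0 : 0 < l.length := List.length_pos_iff.mpr hlnil
  have hdlen : d ≤ l.length := durfee_le_length l
  have hd2 : 2 ≤ d := by
    have : (0 : ℤ) ≤ ((dGamma l).headD 0 : ℤ) := Int.ofNat_nonneg _
    omega
  have hhead : l.getD 0 0 = l.length := by
    rw [rankL, headD_eq_getD] at hrank
    omega
  -- the β condition
  have hβ' : l.getD d 0 ≤ d - 1 := by
    rw [dDelta_eq, headD_drop, ← hd] at hβ
    omega
  -- d ≤ λ_d
  have hspec : d ≤ l.getD (d - 1) 0 := by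
    have h1 : (1 : ℕ) ≤ l.getD 0 0 := by
      have := hpos (l.getD 0 0) (by
        rw [List.getD_eq_getElem l 0 hlen0]; exact List.getElem_mem hlen0)
      omega
    have := Nat.findGreatest_spec (P := fun k => k ≤ l.getD (k - 1) 0)
      (m := 1) (n := l.length) hlen0 (by simpa using h1)
    rw [durfee_def] at hd
    rw [hd]
    exact this
  -- λ_{d-1} ≤ d  (index d-2), from the γ condition
  have hgd2 : l.getD (d - 2) 0 ≤ d := by
    by_contra hcon
    push_neg at hcon
    have hhead_big : d < l.getD 0 0 := lt_of_lt_of_le hcon (getD_anti hs (by omega))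
    have hne : ((l.take d).map (fun x => x - d)).headD 0 ≠ 0 := by
      rw [headD_map_take l _ (by omega) hlnil]
      omega
    have hγ2 : (dGamma l).headD 0 =
        ((l.take d).map (fun x => x - d)).countP (fun x => 0 < x) := by
      rw [dGamma_eq, ← hd, conjugate_headD _ hne]
    rw [List.countP_map] at hγ2
    -- all entries of l.take (d-1) are > d
    have hall : ((l.take (d-1)).countP ((fun x => decide (0 < x)) ∘ fun x => x - d))
        = d - 1 := by
      have hlen : (l.take (d-1)).length = d - 1 := by
        rw [List.length_take]; omega
      have hx : ∀ a ∈ l.take (d-1), ((fun x => decide (0 < x)) ∘ fun x => x - d) a = true := by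
        intro a ha
        obtain ⟨i, hi, rfl⟩ := List.mem_iff_getElem.mp ha
        rw [List.getElem_take]
        have hilen : i < l.length := by
          rw [List.length_take] at hi; omega
        have : l.getD (d - 2) 0 ≤ l.getD i 0 := by
          apply getD_anti hs
          rw [List.length_take] at hi; omega
        rw [List.getD_eq_getElem l 0 hilen] at this
        simp only [Function.comp_apply, decide_eq_true_eq]
        omega
      rw [List.countP_eq_length.mpr hx, hlen]
    have hsub : (l.take (d-1)).countP ((fun x => decide (0 < x)) ∘ fun x => x - d)
        ≤ (l.take d).countP ((fun x => decide (0 < x)) ∘ fun x => x - d) := by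
      apply List.Sublist.countP_le
      have : l.take (d-1) = (l.take d).take (d-1) := by
        rw [List.take_take]; congr 1; omega
      rw [this]
      exact List.take_sublist _ _
    omega
  have hgd1 : l.getD (d - 1) 0 = d := by
    have : l.getD (d - 1) 0 ≤ l.getD (d - 2) 0 := getD_anti hs (by omega)
    omega
  have hgd2' : l.getD (d - 2) 0 = d := by
    have : l.getD (d - 1) 0 ≤ l.getD (d - 2) 0 := getD_anti hs (by omega)
    omega
  have hd3 : 3 ≤ d := by
    by_contra hcon
    have hdd : d = 2 := by omega
    have hh2 : l.getD 0 0 = 2 := by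
      have h' := hgd2'
      rw [hdd] at h'
      simpa using h' 
    have hlen2 : l.length = 2 := by omega
    have : n = l.getD 0 0 + l.getD 1 0 := by
      rw [← hsum, sum_eq_sum_getD, hlen2]
      rw [Finset.sum_range_succ, Finset.sum_range_one]
    have h10 : l.getD 1 0 ≤ l.getD 0 0 := getD_anti hs (by omega)
    omega
  exact ⟨hd3, hdlen, hhead, hgd2', hgd1, hβ'⟩

private def Fmap (l : List ℕ) : List ℕ :=
  (List.range (l.length + 1)).map (fun i =>
    if i = 0 then l.getD 0 0
    else if i ≤ durfee l - 2 then l.getD i 0 - 1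
    else if i ≤ durfee l then durfee l - 1
    else l.getD (i - 1) 0)

private lemma Fmap_length (l : List ℕ) : (Fmap l).length = l.length + 1 := by
  simp [Fmap]

private lemma Fmap_getD (l : List ℕ) {i : ℕ} (h : i < l.length + 1) :
    (Fmap l).getD i 0 = if i = 0 then l.getD 0 0
      else if i ≤ durfee l - 2 then l.getD i 0 - 1
      else if i ≤ durfee l then durfee l - 1
      else l.getD (i - 1) 0 := by
  rw [List.getD_eq_getElem _ _ (by rw [Fmap_length]; exact h)]
  simp [Fmap]

private lemma construct {n : ℕ} (hn : 5 ≤ n) {l : List ℕ}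
    (hP : IsPartition l n) (hrank : rankL l = 0)
    (hβ : ((dDelta l).headD 0 : ℤ) ≤ (durfee l : ℤ) - 1)
    (hγ : ((dGamma l).headD 0 : ℤ) ≤ (durfee l : ℤ) - 2) :
    (IsPartition (Fmap l) n ∧
      (dGamma (Fmap l)).length + 1 = (dDelta (Fmap l)).length ∧
      ((dGamma (Fmap l)).headD 0 : ℤ) ≤ (durfee (Fmap l) : ℤ) - 1 ∧
      (dDelta (Fmap l)).headD 0 = durfee (Fmap l)) ∧
    durfee (Fmap l) = durfee l - 1 := by
  obtain ⟨hd3, hdlen, hhead, hgd2, hgd1, hafter⟩ := key hn hP hrank hβ hγ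
  obtain ⟨hs, hpos, hsum⟩ := hP
  set d := durfee l with hd
  set m := Fmap l with hm
  have hmlen : m.length = l.length + 1 := Fmap_length l
  have hg0 : m.getD 0 0 = l.getD 0 0 := by
    rw [hm, Fmap_getD l (by omega)]; simp
  have hgmid : ∀ i, 1 ≤ i → i ≤ d - 2 → m.getD i 0 = l.getD i 0 - 1 := by
    intro i h1 h2
    rw [hm, Fmap_getD l (by omega), if_neg (by omega), if_pos h2]
  have hgpk : ∀ i, d - 2 < i → i ≤ d → m.getD i 0 = d - 1 := by
    intro i h1 h2
    rw [hm, Fmap_getD l (by omega), if_neg (by omega), if_neg (by omega), if_pos h2]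
  have hgtl : ∀ i, d < i → i < l.length + 1 → m.getD i 0 = l.getD (i - 1) 0 := by
    intro i h1 h2
    rw [hm, Fmap_getD l h2, if_neg (by omega), if_neg (by omega), if_neg (by omega)]
  have hge : ∀ i, i ≤ d - 2 → d ≤ l.getD i 0 := by
    intro i hi
    have := getD_anti hs (show i ≤ d - 2 from hi)
    omega
  have hsort : m.Pairwise (· ≥ ·) := by
    apply sorted_of_getD
    intro i hilen
    rw [hmlen] at hilen
    have hcases : i = 0 ∨ (1 ≤ i ∧ i + 1 ≤ d - 2) ∨ (1 ≤ i ∧ i ≤ d - 2 ∧ d - 2 < i + 1) ∨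
        (d - 2 < i ∧ i + 1 ≤ d) ∨ i = d ∨ d < i := by omega
    rcases hcases with rfl | ⟨h1, h2⟩ | ⟨h1, h2, h3⟩ | ⟨h1, h2⟩ | rfl | h1
    · rw [hg0, hgmid 1 (by omega) (by omega)]
      have := getD_anti hs (show 0 ≤ 1 by omega)
      omega
    · rw [hgmid i h1 (by omega), hgmid (i+1) (by omega) h2]
      have := getD_anti hs (show i ≤ i + 1 by omega)
      omega
    · rw [hgmid i h1 h2, hgpk (i+1) (by omega) (by omega)]
      have h4 := hge i h2
      omega
    · rw [hgpk i h1 (by omega), hgpk (i+1) (by omega) h2]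
    · rw [hgpk d (by omega) (by omega), hgtl (d+1) (by omega) (by omega)]
      exact hafter
    · rw [hgtl i h1 (by omega), hgtl (i+1) (by omega) (by omega)]
      exact getD_anti hs (by omega)
  have hposm : ∀ x ∈ m, 0 < x := by
    intro x hx
    obtain ⟨i, hi, rfl⟩ := List.mem_iff_getElem.mp hx
    rw [← List.getD_eq_getElem m 0 hi]
    rw [hmlen] at hi
    have hcases : i = 0 ∨ (1 ≤ i ∧ i ≤ d - 2) ∨ (d - 2 < i ∧ i ≤ d) ∨ d < i := by omega
    rcases hcases with rfl | ⟨h1, h2⟩ | ⟨h1, h2⟩ | h1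
    · rw [hg0]
      have := hge 0 (by omega)
      omega
    · rw [hgmid i h1 h2]
      have := hge i h2
      omega
    · rw [hgpk i h1 h2]; omega
    · rw [hgtl i h1 hi]
      have hil : i - 1 < l.length := by omega
      rw [List.getD_eq_getElem l 0 hil]
      exact hpos _ (List.getElem_mem hil)
  have hsum' : m.sum = n := by
    have hm1 : m.sum = ∑ i ∈ Finset.range (l.length + 1), m.getD i 0 := by
      rw [sum_eq_sum_getD, hmlen]
    have hl1 : n = ∑ i ∈ Finset.range l.length, l.getD i 0 := by
      rw [← hsum, sum_eq_sum_getD]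
    have e0 : ∑ i ∈ Finset.Ico 0 1, m.getD i 0 = l.getD 0 0 := by
      rw [Finset.sum_Ico_eq_sum_range]
      simpa using hg0
    have e1 : ∑ i ∈ Finset.Ico 1 (d-1), m.getD i 0 + (d - 2)
        = ∑ i ∈ Finset.Ico 1 (d-1), l.getD i 0 := by
      have hc : ∀ i ∈ Finset.Ico 1 (d-1), l.getD i 0 = m.getD i 0 + 1 := by
        intro i hi
        rw [Finset.mem_Ico] at hi
        rw [hgmid i hi.1 (by omega)]
        have := hge i (by omega)
        omega
      rw [Finset.sum_congr rfl hc, Finset.sum_add_distrib]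
      have : ∑ _i ∈ Finset.Ico 1 (d-1), 1 = d - 2 := by
        rw [Finset.sum_const, Nat.card_Ico, smul_eq_mul, mul_one]
        omega
      omega
    have e2 : ∑ i ∈ Finset.Ico (d-1) (d+1), m.getD i 0 = (d-1) + (d-1) := by
      rw [Finset.sum_Ico_eq_sum_range]
      rw [show d + 1 - (d - 1) = 2 by omega]
      rw [Finset.sum_range_succ, Finset.sum_range_one]
      rw [hgpk (d-1+0) (by omega) (by omega), hgpk (d-1+1) (by omega) (by omega)]
    have e3 : ∑ i ∈ Finset.Ico (d+1) (l.length+1), m.getD i 0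
        = ∑ i ∈ Finset.Ico d l.length, l.getD i 0 := by
      rw [Finset.sum_Ico_eq_sum_range, Finset.sum_Ico_eq_sum_range]
      rw [show l.length + 1 - (d + 1) = l.length - d by omega]
      apply Finset.sum_congr rfl
      intro k hk
      rw [Finset.mem_range] at hk
      rw [hgtl (d+1+k) (by omega) (by omega)]
      congr 1
      omega
    have f1 : n = l.getD 0 0 + ∑ i ∈ Finset.Ico 1 (d-1), l.getD i 0 + l.getD (d-1) 0
        + ∑ i ∈ Finset.Ico d l.length, l.getD i 0 := by
      rw [hl1, Finset.range_eq_Ico]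
      rw [← Finset.sum_Ico_consecutive (fun i => l.getD i 0)
        (show (0:ℕ) ≤ 1 by omega) (show 1 ≤ l.length by omega)]
      rw [← Finset.sum_Ico_consecutive (fun i => l.getD i 0)
        (show 1 ≤ d - 1 by omega) (show d - 1 ≤ l.length by omega)]
      rw [← Finset.sum_Ico_consecutive (fun i => l.getD i 0)
        (show d - 1 ≤ d by omega) (show d ≤ l.length by omega)]
      have g0 : ∑ i ∈ Finset.Ico 0 1, l.getD i 0 = l.getD 0 0 := by
        rw [Finset.sum_Ico_eq_sum_range]
        simp
      have g2 : ∑ i ∈ Finset.Ico (d-1) d, l.getD i 0 = l.getD (d-1) 0 := by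
        rw [Finset.sum_Ico_eq_sum_range, show d - (d-1) = 1 by omega, Finset.sum_range_one]
        simp only [Nat.add_zero]
      rw [g0, g2]
      ring
    rw [hm1, Finset.range_eq_Ico]
    rw [← Finset.sum_Ico_consecutive (fun i => m.getD i 0)
      (show (0:ℕ) ≤ 1 by omega) (show 1 ≤ l.length + 1 by omega)]
    rw [← Finset.sum_Ico_consecutive (fun i => m.getD i 0)
      (show 1 ≤ d - 1 by omega) (show d - 1 ≤ l.length + 1 by omega)]
    rw [← Finset.sum_Ico_consecutive (fun i => m.getD i 0)
      (show d - 1 ≤ d + 1 by omega) (show d + 1 ≤ l.length + 1 by omega)]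
    rw [e0, e2, e3]
    omega
  have hdm : durfee m = d - 1 := by
    apply durfee_eq hsort (by omega) (by rw [hmlen]; omega)
    · have hidx : d - 1 - 1 = d - 2 := by omega
      rw [hidx, hgmid (d-2) (by omega) (le_refl _), hgd2]
    · rw [hgpk (d-1) (by omega) (by omega)]
  have hδ : dDelta m = m.drop (d-1) := by rw [dDelta_eq, hdm]
  have hδlen : (dDelta m).length = l.length + 2 - d := by
    rw [hδ, List.length_drop, hmlen]; omega
  have hδhead : (dDelta m).headD 0 = d - 1 := by
    rw [hδ, headD_drop]
    rw [hgpk (d-1) (by omega) (by omega)]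
  have hγm : dGamma m = conjugate ((m.take (d-1)).map (fun x => x - (d-1))) := by
    rw [dGamma_eq, hdm]
  have hmnil : m ≠ [] := by
    intro h
    rw [h] at hmlen
    simp at hmlen
  have hγlen : (dGamma m).length = l.length - (d - 1) := by
    rw [hγm, conjugate_length, headD_map_take m _ (by omega) hmnil, hg0, hhead]
  have c1 : (dGamma m).length + 1 = (dDelta m).length := by
    rw [hγlen, hδlen]; omega
  have c3 : (dDelta m).headD 0 = durfee m := by rw [hδhead, hdm]
  have hne : ((m.take (d-1)).map (fun x => x - (d-1))).headD 0 ≠ 0 := by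
    rw [headD_map_take m _ (by omega) hmnil, hg0, hhead]
    omega
  have hγhead : (dGamma m).headD 0
      = (m.take (d-1)).countP ((fun x => decide (0 < x)) ∘ fun x => x - (d-1)) := by
    rw [hγm, conjugate_headD _ hne, List.countP_map]
  have hlent : (m.take (d-1)).length = d - 1 := by
    rw [List.length_take, hmlen]; omega
  have hsplit := List.length_eq_countP_add_countP
    (l := m.take (d-1)) ((fun x => decide (0 < x)) ∘ fun x => x - (d-1))
  have hwit : 0 < (m.take (d-1)).countP
      (fun a => decide ¬(((fun x => decide (0 < x)) ∘ fun x => x - (d-1)) a = true)) := by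
    rw [List.countP_pos_iff]
    refine ⟨m.getD (d-2) 0, ?_, ?_⟩
    · have hidx : d - 2 < (m.take (d-1)).length := by rw [hlent]; omega
      have heq2 : (m.take (d-1))[d-2] = m.getD (d-2) 0 := by
        rw [List.getElem_take, List.getD_eq_getElem m 0 (by rw [hmlen]; omega)]
      rw [← heq2]
      exact List.getElem_mem hidx
    · rw [hgmid (d-2) (by omega) (le_refl _), hgd2]
      simp
  have hcount : (m.take (d-1)).countP
      ((fun x => decide (0 < x)) ∘ fun x => x - (d-1)) ≤ d - 2 := by
    omega
  have c2 : ((dGamma m).headD 0 : ℤ) ≤ (durfee m : ℤ) - 1 := by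
    rw [hγhead, hdm]
    omega
  exact ⟨⟨⟨hsort, hposm, hsum'⟩, c1, c2, c3⟩, hdm⟩

private lemma Fmap_inj {n : ℕ} (hn : 5 ≤ n) {l l' : List ℕ}
    (hP : IsPartition l n) (hrank : rankL l = 0)
    (hβ : ((dDelta l).headD 0 : ℤ) ≤ (durfee l : ℤ) - 1)
    (hγ : ((dGamma l).headD 0 : ℤ) ≤ (durfee l : ℤ) - 2)
    (hP' : IsPartition l' n) (hrank' : rankL l' = 0)
    (hβ' : ((dDelta l').headD 0 : ℤ) ≤ (durfee l' : ℤ) - 1)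
    (hγ' : ((dGamma l').headD 0 : ℤ) ≤ (durfee l' : ℤ) - 2)
    (heq : Fmap l = Fmap l') : l = l' := by
  obtain ⟨hd3, hdlen, hhead, hgd2, hgd1, hafter⟩ := key hn hP hrank hβ hγ
  obtain ⟨hd3', hdlen', hhead', hgd2', hgd1', hafter'⟩ := key hn hP' hrank' hβ' hγ'
  have hdm := (construct hn hP hrank hβ hγ).2
  have hdm' := (construct hn hP' hrank' hβ' hγ').2
  have hlen : l.length = l'.length := by
    have := congrArg List.length heq
    rw [Fmap_length, Fmap_length] at this
    omega
  have hdur : durfee l = durfee l' := by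
    rw [heq] at hdm
    omega
  rw [← hdur] at hgd2' hgd1'
  have hge : ∀ i, i ≤ durfee l - 2 → durfee l ≤ l.getD i 0 := by
    intro i hi
    have := getD_anti hP.1 (show i ≤ durfee l - 2 from hi)
    omega
  have hge' : ∀ i, i ≤ durfee l - 2 → durfee l ≤ l'.getD i 0 := by
    intro i hi
    have := getD_anti hP'.1 (show i ≤ durfee l - 2 from hi)
    omega
  have hget : ∀ i, (Fmap l).getD i 0 = (Fmap l').getD i 0 := by
    intro i
    rw [heq]
  apply List.ext_getElem hlen
  intro j hj hj'
  rw [← List.getD_eq_getElem l 0 hj, ← List.getD_eq_getElem l' 0 hj']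
  have hcases : j = 0 ∨ (1 ≤ j ∧ j ≤ durfee l - 2) ∨ j = durfee l - 1 ∨ durfee l ≤ j := by
    omega
  rcases hcases with rfl | ⟨h1, h2⟩ | rfl | h1
  · have h0 := hget 0
    rw [Fmap_getD l (by omega), Fmap_getD l' (by rw [← hlen]; omega)] at h0
    simpa using h0
  · have h0 := hget j
    rw [Fmap_getD l (by omega), Fmap_getD l' (by rw [← hlen]; omega), ← hdur] at h0
    rw [if_neg (by omega), if_pos h2, if_neg (by omega), if_pos h2] at h0
    have := hge j h2
    have := hge' j h2
    omega
  · rw [hgd1, hgd1']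
  · have h0 := hget (j + 1)
    rw [Fmap_getD l (by omega), Fmap_getD l' (by rw [← hlen]; omega), ← hdur] at h0
    rw [if_neg (by omega), if_neg (by omega), if_neg (by omega),
      if_neg (by omega), if_neg (by omega), if_neg (by omega)] at h0
    exact h0

private lemma finite_part (n : ℕ) (C : List ℕ → Prop) :
    Finite {l : List ℕ // IsPartition l n ∧ C l} := by
  apply Finite.of_injective (β := n.Partition)
    (fun x => ⟨(x.1 : Multiset ℕ),
      fun {i} hi => x.2.1.2.1 i (Multiset.mem_coe.mp hi),
      by rw [Multiset.sum_coe]; exact x.2.1.2.2⟩)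
  intro a b hab
  have h1 : (a.1 : Multiset ℕ) = (b.1 : Multiset ℕ) := congrArg Nat.Partition.parts hab
  have hperm := Multiset.coe_eq_coe.mp h1
  exact Subtype.ext (List.Perm.eq_of_pairwise (fun a b _ _ h1 h2 => le_antisymm h2 h1) a.2.1.1 b.2.1.1 hperm)

end StrUni

namespace StrUni

theorem stmt19 (n : ℕ) (hn : 5 ≤ n) :
    Nat.card {l : List ℕ // IsPartition l n ∧ rankL l = 0 ∧
        ((dDelta l).headD 0 : ℤ) ≤ (durfee l : ℤ) - 1 ∧
        ((dGamma l).headD 0 : ℤ) ≤ (durfee l : ℤ) - 2} ≤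
    Nat.card {l : List ℕ // IsPartition l n ∧
        (dGamma l).length + 1 = (dDelta l).length ∧
        ((dGamma l).headD 0 : ℤ) ≤ (durfee l : ℤ) - 1 ∧
        (dDelta l).headD 0 = durfee l} := by
  have : Finite {l : List ℕ // IsPartition l n ∧
      (dGamma l).length + 1 = (dDelta l).length ∧
      ((dGamma l).headD 0 : ℤ) ≤ (durfee l : ℤ) - 1 ∧
      (dDelta l).headD 0 = durfee l} :=
    finite_part n _
  apply Nat.card_le_card_of_injective
    (fun x => ⟨Fmap x.1, (construct hn x.2.1 x.2.2.1 x.2.2.2.1 x.2.2.2.2).1⟩)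
  intro a b hab
  apply Subtype.ext
  exact Fmap_inj hn a.2.1 a.2.2.1 a.2.2.2.1 a.2.2.2.2 b.2.1 b.2.2.1 b.2.2.2.1 b.2.2.2.2
    (congrArg Subtype.val hab)

end StrUni
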